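/- Suppose Z_i = Γ_{θ*} + ε_i for i = 1,…,n, where θ* ∈ ℝ^p and ε₁,…,ε_n are symmetric d×d matrices, and suppose max_{1 ≤ j ≤ p} ‖B_j‖_F ≤ M₁. Let θ̂ be a minimizer of ℓ^λ and set Σ̂ = Γ_{θ̂}, Σ = Γ_{θ*}. Then ‖Σ̂ − Σ‖_F² ≤ (2 u_p M₁ / n) ‖Σ_{i=1}^n ε_i‖₂ |θ* − θ̂|₁ + (2λ/n)( |θ*|₁ − |θ̂|₁ ), where u_p = max_{1 ≤ j ≤ p} √(rank(B_j)) and |·|₁ is the ℓ₁ norm on ℝ^p. -/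

import Mathlib

open Matrix MeasureTheory ProbabilityTheory Finset

noncomputable section

/-- Frobenius inner product `⟨A,B⟩ = tr(Aᵀ B)`. -/
def frobInner {d : ℕ} (A B : Matrix (Fin d) (Fin d) ℝ) : ℝ := Matrix.trace (Aᵀ * B)

/-- Frobenius norm `‖A‖_F = √⟨A,A⟩`. -/
def frobNorm {d : ℕ} (A : Matrix (Fin d) (Fin d) ℝ) : ℝ := Real.sqrt (frobInner A A)

/-- Spectral (operator) norm of a matrix, as the operator norm of the induced
linear map on Euclidean space. -/
def specNorm {d : ℕ} (A : Matrix (Fin d) (Fin d) ℝ) : ℝ :=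
  ‖LinearMap.toContinuousLinearMap (Matrix.toEuclideanLin A)‖

/-- Loewner order: `A ⪯ B` iff `B - A` is positive semidefinite. -/
def loewnerLE {d : ℕ} (A B : Matrix (Fin d) (Fin d) ℝ) : Prop := (B - A).PosSemidef

/-- Entrywise expectation of a random matrix. -/
def matExp {Ω : Type*} [MeasurableSpace Ω] (μ : Measure Ω) {d : ℕ}
    (X : Ω → Matrix (Fin d) (Fin d) ℝ) : Matrix (Fin d) (Fin d) ℝ :=
  Matrix.of fun a c => ∫ ω, X ω a c ∂μ

/-- Linear predictor `Γ_θ = ∑ⱼ θⱼ Bⱼ`. -/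
def Gamma {d p : ℕ} (B : Fin p → Matrix (Fin d) (Fin d) ℝ) (θ : Fin p → ℝ) :
    Matrix (Fin d) (Fin d) ℝ := ∑ j, θ j • B j

/-- Empirical risk `ℓ(θ) = ∑ᵢ ‖Zᵢ - Γ_θ‖_F²`. -/
def empRisk {d p n : ℕ} (B : Fin p → Matrix (Fin d) (Fin d) ℝ)
    (Z : Fin n → Matrix (Fin d) (Fin d) ℝ) (θ : Fin p → ℝ) : ℝ :=
  ∑ i, (frobNorm (Z i - Gamma B θ)) ^ 2

/-- Penalized objective `ℓ^λ(θ) = ℓ(θ) + 2λ ∑ⱼ |θⱼ|`. -/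
def objective {d p n : ℕ} (B : Fin p → Matrix (Fin d) (Fin d) ℝ)
    (Z : Fin n → Matrix (Fin d) (Fin d) ℝ) (lam : ℝ) (θ : Fin p → ℝ) : ℝ :=
  empRisk B Z θ + 2 * lam * ∑ j, |θ j|

/-- Soft-thresholding operator `ST`. -/
def softThresh (a lam : ℝ) : ℝ := if lam < a then a - lam else if a < -lam then a + lam else 0

/-- Measurable space structure on matrices (entrywise, via the Pi structure). -/
instance matrixMeasurableSpace {d : ℕ} : MeasurableSpace (Matrix (Fin d) (Fin d) ℝ) :=
  (inferInstance : MeasurableSpace (Fin d → Fin d → ℝ))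

/-! Comparing the objective at `θhat` and at `θstar` gives the basic inequality
`n ‖Δ‖_F² ≤ 2 ⟨∑ εᵢ, Δ⟩ + 2λ (|θstar|₁ - |θhat|₁)` with `Δ = Γ_θhat - Γ_θstar = Γ_(θhat - θstar)`.
The cross term is bounded coordinatewise by trace duality: diagonalising the symmetric `Bⱼ`,
`⟨E, Bⱼ⟩ = ∑ₖ λₖ vₖᵀ E vₖ`, so `|⟨E, Bⱼ⟩| ≤ ‖E‖₂ ∑ₖ |λₖ| ≤ ‖E‖₂ √(rank Bⱼ) ‖Bⱼ‖_F`, the last step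
being Cauchy–Schwarz over the `rank Bⱼ` nonzero eigenvalues. -/

theorem sum_abs_le_sqrt_card_support_mul_sqrt_sum_sq {ι : Type*} [Fintype ι] (a : ι → ℝ) :
    ∑ i, |a i| ≤ √(#{i | a i ≠ 0} : ℝ) * √(∑ i, a i ^ 2) := by
  set s : Finset ι := {i | a i ≠ 0}
  have hs : ∀ f : ℝ → ℝ, f 0 = 0 → ∑ i ∈ s, f (a i) = ∑ i, f (a i) := fun f hf =>
    sum_filter_of_ne fun i _ hi h0 => hi (h0 ▸ hf)
  rw [← hs _ abs_zero, ← hs (· ^ 2) (zero_pow two_ne_zero), ← Real.sqrt_mul (by positivity)]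
  apply Real.le_sqrt_of_sq_le
  simpa only [sq_abs] using sq_sum_le_card_mul_sum_sq (s := s) (f := fun i => |a i|)

namespace Matrix.IsHermitian

variable {n : Type*} [Fintype n] [DecidableEq n] {A : Matrix n n ℝ}

theorem apply_eq_sum_eigenvalues (hA : A.IsHermitian) (i j : n) :
    A i j = ∑ k, hA.eigenvalues k * hA.eigenvectorBasis k i * hA.eigenvectorBasis k j := by
  conv_lhs => rw [hA.spectral_theorem]
  simp [Matrix.mul_apply, Matrix.diagonal, mul_comm]

theorem dotProduct_mulVec_eigenvectorBasis (hA : A.IsHermitian) (k : n) :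
    ⇑(hA.eigenvectorBasis k) ⬝ᵥ A *ᵥ ⇑(hA.eigenvectorBasis k) = hA.eigenvalues k := by
  simpa using (hA.eigenvalues_eq k).symm

end Matrix.IsHermitian

section Frobenius

variable {d : ℕ}

theorem frobInner_eq_sum (A B : Matrix (Fin d) (Fin d) ℝ) :
    frobInner A B = ∑ i, ∑ j, A i j * B i j := by
  rw [frobInner, ← trace_transpose_mul, trace]
  simp [mul_apply]

theorem frobNorm_sq (A : Matrix (Fin d) (Fin d) ℝ) : frobNorm A ^ 2 = frobInner A A := by
  rw [frobNorm, Real.sq_sqrt]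
  rw [frobInner_eq_sum]
  exact sum_nonneg fun i _ => sum_nonneg fun j _ => mul_self_nonneg _

theorem frobNorm_sub_sq (A B : Matrix (Fin d) (Fin d) ℝ) :
    frobNorm (A - B) ^ 2 = frobNorm A ^ 2 - 2 * frobInner A B + frobNorm B ^ 2 := by
  simp only [frobNorm_sq, frobInner_eq_sum, Matrix.sub_apply, mul_sum, ← sum_sub_distrib,
    ← sum_add_distrib]
  exact sum_congr rfl fun i _ => sum_congr rfl fun j _ => by ring

theorem frobInner_sum_left {ι : Type*} [Fintype ι] (f : ι → Matrix (Fin d) (Fin d) ℝ)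
    (A : Matrix (Fin d) (Fin d) ℝ) : frobInner (∑ i, f i) A = ∑ i, frobInner (f i) A := by
  simp only [frobInner_eq_sum, Matrix.sum_apply, sum_mul]
  exact (sum_congr rfl fun i _ => sum_comm).trans sum_comm

theorem frobInner_eq_sum_eigenvalues (E : Matrix (Fin d) (Fin d) ℝ)
    {B : Matrix (Fin d) (Fin d) ℝ} (hB : B.IsHermitian) :
    frobInner E B = ∑ k, hB.eigenvalues k *
      (⇑(hB.eigenvectorBasis k) ⬝ᵥ E *ᵥ ⇑(hB.eigenvectorBasis k)) := by
  simp only [frobInner_eq_sum, hB.apply_eq_sum_eigenvalues, dotProduct, mulVec, mul_sum]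
  refine (sum_congr rfl fun i _ => sum_comm).trans (sum_comm.trans ?_)
  exact sum_congr rfl fun k _ => sum_congr rfl fun i _ => sum_congr rfl fun j _ => by ring

theorem frobNorm_sq_eq_sum_eigenvalues_sq {B : Matrix (Fin d) (Fin d) ℝ} (hB : B.IsHermitian) :
    frobNorm B ^ 2 = ∑ k, hB.eigenvalues k ^ 2 := by
  simp_rw [frobNorm_sq, frobInner_eq_sum_eigenvalues B hB,
    hB.dotProduct_mulVec_eigenvectorBasis, sq]

theorem abs_dotProduct_mulVec_le_specNorm (E : Matrix (Fin d) (Fin d) ℝ)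
    (x : EuclideanSpace ℝ (Fin d)) : |⇑x ⬝ᵥ E *ᵥ ⇑x| ≤ specNorm E * ‖x‖ ^ 2 := by
  have hinner : ⇑x ⬝ᵥ E *ᵥ ⇑x =
      inner ℝ x (LinearMap.toContinuousLinearMap (Matrix.toEuclideanLin E) x) := by
    rw [EuclideanSpace.inner_eq_star_dotProduct, dotProduct_comm]
    rfl
  calc |⇑x ⬝ᵥ E *ᵥ ⇑x| ≤ ‖x‖ * ‖LinearMap.toContinuousLinearMap (Matrix.toEuclideanLin E) x‖ :=
        hinner ▸ abs_real_inner_le_norm _ _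
    _ ≤ ‖x‖ * (specNorm E * ‖x‖) := by gcongr; exact ContinuousLinearMap.le_opNorm _ _
    _ = specNorm E * ‖x‖ ^ 2 := by ring

theorem abs_frobInner_le_specNorm_mul_sqrt_rank_mul_frobNorm (E : Matrix (Fin d) (Fin d) ℝ)
    {B : Matrix (Fin d) (Fin d) ℝ} (hB : B.IsHermitian) :
    |frobInner E B| ≤ specNorm E * (√(B.rank : ℝ) * frobNorm B) := by
  have hquad : ∀ k, |⇑(hB.eigenvectorBasis k) ⬝ᵥ E *ᵥ ⇑(hB.eigenvectorBasis k)| ≤ specNorm E :=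
    fun k => by simpa using abs_dotProduct_mulVec_le_specNorm E (hB.eigenvectorBasis k)
  have hrank : (B.rank : ℝ) = #{k | hB.eigenvalues k ≠ 0} := by
    rw [hB.rank_eq_card_non_zero_eigs, Fintype.card_subtype]
  have hfrob : frobNorm B = √(∑ k, hB.eigenvalues k ^ 2) := by
    rw [← frobNorm_sq_eq_sum_eigenvalues_sq hB]
    exact (Real.sqrt_sq (Real.sqrt_nonneg _)).symm
  calc |frobInner E B|
      ≤ ∑ k, |hB.eigenvalues k| *
          |⇑(hB.eigenvectorBasis k) ⬝ᵥ E *ᵥ ⇑(hB.eigenvectorBasis k)| := by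
        rw [frobInner_eq_sum_eigenvalues E hB]
        exact (abs_sum_le_sum_abs _ _).trans_eq (by simp only [abs_mul])
    _ ≤ ∑ k, |hB.eigenvalues k| * specNorm E := by gcongr; exact hquad _
    _ = specNorm E * ∑ k, |hB.eigenvalues k| := by rw [← sum_mul, mul_comm]
    _ ≤ specNorm E * (√(B.rank : ℝ) * frobNorm B) := by
        rw [hrank, hfrob]
        gcongr
        · exact norm_nonneg _
        · exact sum_abs_le_sqrt_card_support_mul_sqrt_sum_sq _

end Frobenius

section LinearModel

variable {d p : ℕ} (B : Fin p → Matrix (Fin d) (Fin d) ℝ)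

theorem Gamma_sub (θ θ' : Fin p → ℝ) : Gamma B θ - Gamma B θ' = Gamma B (θ - θ') := by
  simp only [Gamma, Pi.sub_apply, sub_smul, sum_sub_distrib]

theorem frobInner_Gamma (E : Matrix (Fin d) (Fin d) ℝ) (θ : Fin p → ℝ) :
    frobInner E (Gamma B θ) = ∑ j, θ j * frobInner E (B j) := by
  simp only [frobInner_eq_sum, Gamma, Matrix.sum_apply, Matrix.smul_apply, smul_eq_mul, mul_sum]
  refine (sum_congr rfl fun i _ => sum_comm).trans (sum_comm.trans ?_)
  exact sum_congr rfl fun j _ => sum_congr rfl fun i _ => sum_congr rfl fun k _ => by ring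

theorem frobInner_Gamma_le (E : Matrix (Fin d) (Fin d) ℝ) {C : ℝ}
    (hC : ∀ j, |frobInner E (B j)| ≤ C) (θ : Fin p → ℝ) :
    frobInner E (Gamma B θ) ≤ C * ∑ j, |θ j| := by
  rw [frobInner_Gamma, mul_sum]
  refine sum_le_sum fun j _ => ?_
  calc θ j * frobInner E (B j) ≤ |θ j| * |frobInner E (B j)| := by
        rw [← abs_mul]; exact le_abs_self _
    _ ≤ C * |θ j| := by rw [mul_comm]; gcongr; exact hC j

theorem empRisk_sub_empRisk {n : ℕ} (θstar : Fin p → ℝ) (ε Z : Fin n → Matrix (Fin d) (Fin d) ℝ)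
    (hZ : ∀ i, Z i = Gamma B θstar + ε i) (θ : Fin p → ℝ) :
    empRisk B Z θ - empRisk B Z θstar =
      n * frobNorm (Gamma B θ - Gamma B θstar) ^ 2
        - 2 * frobInner (∑ i, ε i) (Gamma B θ - Gamma B θstar) := by
  have hres : ∀ i, Z i - Gamma B θ = ε i - (Gamma B θ - Gamma B θstar) := fun i => by
    rw [hZ]; abel
  have hnoise : ∀ i, Z i - Gamma B θstar = ε i := fun i => by rw [hZ, add_sub_cancel_left]
  have hcancel : ∀ x y z : ℝ, x - 2 * y + z - x = z - 2 * y := fun _ _ _ => by ring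
  generalize Gamma B θ - Gamma B θstar = Δ at hres ⊢
  simp only [empRisk, hres, hnoise, frobNorm_sub_sq, ← sum_sub_distrib, hcancel]
  rw [sum_sub_distrib, sum_const, card_univ, Fintype.card_fin, nsmul_eq_mul, frobInner_sum_left,
    mul_sum]

end LinearModel

theorem stmt_6_general {d p n : ℕ} (hp : 0 < p) (hn : 0 < n) (M₁ : ℝ)
    (B : Fin p → Matrix (Fin d) (Fin d) ℝ) (hBsymm : ∀ j, (B j)ᵀ = B j)
    (hBF : ∀ j, frobNorm (B j) ≤ M₁)
    (u : ℝ) (hu : u = Finset.univ.sup' (Finset.univ_nonempty_iff.mpr ⟨⟨0, hp⟩⟩)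
      (fun j => Real.sqrt ((B j).rank : ℝ)))
    (θstar : Fin p → ℝ)
    (ε : Fin n → Matrix (Fin d) (Fin d) ℝ)
    (Z : Fin n → Matrix (Fin d) (Fin d) ℝ) (hZ : ∀ i, Z i = Gamma B θstar + ε i)
    (lam : ℝ)
    (θhat : Fin p → ℝ) (hθhat : ∀ θ, objective B Z lam θhat ≤ objective B Z lam θ) :
    frobNorm (Gamma B θhat - Gamma B θstar) ^ 2
      ≤ (2 * u * M₁ / n) * specNorm (∑ i, ε i) * (∑ j, |θstar j - θhat j|)
        + (2 * lam / n) * ((∑ j, |θstar j|) - ∑ j, |θhat j|) := by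
  set E := ∑ i, ε i
  have hrank_le : ∀ j, √((B j).rank : ℝ) ≤ u := fun j =>
    hu ▸ le_sup' (fun j => √((B j).rank : ℝ)) (mem_univ j)
  have hu0 : 0 ≤ u := (Real.sqrt_nonneg _).trans (hrank_le ⟨0, hp⟩)
  have hcross : frobInner E (Gamma B θhat - Gamma B θstar)
      ≤ specNorm E * (u * M₁) * ∑ j, |θstar j - θhat j| := by
    have hB : ∀ j, |frobInner E (B j)| ≤ specNorm E * (u * M₁) := fun j =>
      (abs_frobInner_le_specNorm_mul_sqrt_rank_mul_frobNorm E
        (isHermitian_iff_isSymm.mpr (hBsymm j))).trans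
        (by gcongr; exacts [norm_nonneg _, Real.sqrt_nonneg _, hrank_le j, hBF j])
    rw [Gamma_sub]
    simpa only [Pi.sub_apply, abs_sub_comm] using frobInner_Gamma_le B E hB (θhat - θstar)
  have hrisk := empRisk_sub_empRisk B θstar ε Z hZ θhat
  have hopt := hθhat θstar
  rw [objective, objective] at hopt
  have hn' : (0 : ℝ) < n := Nat.cast_pos.mpr hn
  calc frobNorm (Gamma B θhat - Gamma B θstar) ^ 2
      = n * frobNorm (Gamma B θhat - Gamma B θstar) ^ 2 / n := by field_simp
    _ ≤ (2 * (specNorm E * (u * M₁) * ∑ j, |θstar j - θhat j|)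
          + 2 * lam * ((∑ j, |θstar j|) - ∑ j, |θhat j|)) / n := by gcongr; linarith
    _ = _ := by ring

/-- basic inequality for the penalized estimator (Lemma on the risk
upper bound). -/
theorem stmt_6 {d p n : ℕ} (hp : 0 < p) (hn : 0 < n) (M₁ : ℝ)
    (B : Fin p → Matrix (Fin d) (Fin d) ℝ) (hBsymm : ∀ j, (B j)ᵀ = B j)
    (hBF : ∀ j, frobNorm (B j) ≤ M₁)
    (u : ℝ) (hu : u = Finset.univ.sup' (Finset.univ_nonempty_iff.mpr ⟨⟨0, hp⟩⟩)
      (fun j => Real.sqrt ((B j).rank : ℝ)))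
    (θstar : Fin p → ℝ)
    (ε : Fin n → Matrix (Fin d) (Fin d) ℝ) (hεsymm : ∀ i, (ε i)ᵀ = ε i)
    (Z : Fin n → Matrix (Fin d) (Fin d) ℝ) (hZ : ∀ i, Z i = Gamma B θstar + ε i)
    (lam : ℝ) (hlam : 0 < lam)
    (θhat : Fin p → ℝ) (hθhat : ∀ θ, objective B Z lam θhat ≤ objective B Z lam θ) :
    frobNorm (Gamma B θhat - Gamma B θstar) ^ 2
      ≤ (2 * u * M₁ / n) * specNorm (∑ i, ε i) * (∑ j, |θstar j - θhat j|)
        + (2 * lam / n) * ((∑ j, |θstar j|) - ∑ j, |θhat j|) :=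
  stmt_6_general hp hn M₁ B hBsymm hBF u hu θstar ε Z hZ lam θhat hθhat
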